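/- Let U ⊆ ℝ² be open and σ₁, σ̂₁ : U → ℝ^6 smooth maps satisfying at every point: ⟨σ₁,σ₁⟩ = ⟨σ̂₁,σ̂₁⟩ = 0, ⟨σ₁,σ̂₁⟩ = −1, ⟨∂_iσ₁,σ₁⟩ = ⟨∂_iσ₁,σ̂₁⟩ = ⟨∂_iσ̂₁,σ₁⟩ = ⟨∂_iσ̂₁,σ̂₁⟩ = 0 for i ∈ {u,v} (dσ₁ and dσ̂₁ take values in (span{σ₁,σ̂₁})^⊥), and ∂_uσ₁ = ∂_uσ̂₁ = 0 (σ₁, σ̂₁ are normalized lifts of the circular curvature spheres of a Ribaucour pair of channel surfaces with corresponding circular curvature direction ∂_u). Define η_u := σ₁ ∧ ∂_uσ̂₁ and η_v := σ₁ ∧ ∂_vσ̂₁. Then: (i) η_u = 0 and ∂_uη_v − ∂_vη_u = 0 (η := σ₁∧dσ̂₁ is a closed 1-form, defining an Ω₀-structure on the channel surface with curvature sphere lift σ₁); and (ii) ∂_iσ̂₁ + η_i σ̂₁ = 0 for i ∈ {u,v} (σ̂₁ is a parallel section of d + η, so the second channel surface is a Lie–Darboux transform of the first with parameter m = 1). 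-/

import Mathlib

noncomputable section

/-- `ℝ^{4,2}`: `ℝ^6` with a bilinear form of signature (4,2). -/
abbrev V6 : Type := Fin 6 → ℝ

/-- The symmetric bilinear form of signature (4,2) on `ℝ^6`. -/
def form (x y : V6) : ℝ :=
  x 0 * y 0 + x 1 * y 1 + x 2 * y 2 + x 3 * y 3 - x 4 * y 4 - x 5 * y 5

/-- Partial derivative in the first (`u`) coordinate. -/
def pu (σ : ℝ × ℝ → V6) (p : ℝ × ℝ) : V6 := fderiv ℝ σ p (1, 0)

/-- Partial derivative in the second (`v`) coordinate. -/
def pv (σ : ℝ × ℝ → V6) (p : ℝ × ℝ) : V6 := fderiv ℝ σ p (0, 1)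

/-- The contact plane `f = span{σ₁, σ₂}`. -/
def spanF (σ₁ σ₂ : ℝ × ℝ → V6) (p : ℝ × ℝ) : Submodule ℝ V6 :=
  Submodule.span ℝ {σ₁ p, σ₂ p}

/-- A local umbilic-free Legendre map in curvature line coordinates `(u,v)` on `U`,
given by lifts `σ₁, σ₂` of the two curvature sphere congruences, with curvature
directions `T₁ = ∂_u` (for `s₁ = span{σ₁}`) and `T₂ = ∂_v` (for `s₂ = span{σ₂}`). -/
structure IsLegendre (U : Set (ℝ × ℝ)) (σ₁ σ₂ : ℝ × ℝ → V6) : Prop where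
  open_U : IsOpen U
  smooth₁ : ContDiffOn ℝ (⊤ : ℕ∞) σ₁ U
  smooth₂ : ContDiffOn ℝ (⊤ : ℕ∞) σ₂ U
  indep : ∀ p ∈ U, LinearIndependent ℝ ![σ₁ p, σ₂ p]
  iso₁₁ : ∀ p ∈ U, form (σ₁ p) (σ₁ p) = 0
  iso₁₂ : ∀ p ∈ U, form (σ₁ p) (σ₂ p) = 0
  iso₂₂ : ∀ p ∈ U, form (σ₂ p) (σ₂ p) = 0
  contact_u : ∀ p ∈ U, form (pu σ₁ p) (σ₂ p) = 0
  contact_v : ∀ p ∈ U, form (pv σ₁ p) (σ₂ p) = 0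
  curv₁ : ∀ p ∈ U, pu σ₁ p ∈ spanF σ₁ σ₂ p
  curv₂ : ∀ p ∈ U, pv σ₂ p ∈ spanF σ₁ σ₂ p
  umb₁ : ∀ p ∈ U, pv σ₁ p ∉ spanF σ₁ σ₂ p
  umb₂ : ∀ p ∈ U, pu σ₂ p ∉ spanF σ₁ σ₂ p

/-- The wedge `a∧b`, acting as the skew endomorphism `x ↦ ⟨a,x⟩b − ⟨b,x⟩a`. -/
def wedge (a b x : V6) : V6 := form a x • b - form b x • a


/-- `form · x` as a continuous linear map. -/
def formL (x : V6) : V6 →L[ℝ] ℝ :=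
  LinearMap.toContinuousLinearMap
    { toFun := fun a => form a x
      map_add' := by intro a b; simp [form]; ring
      map_smul' := by intro c a; simp [form]; ring }

@[simp] lemma formL_apply (x a : V6) : formL x a = form a x := rfl

@[simp] lemma form_zero_left (x : V6) : form 0 x = 0 := by simp [form]

lemma wedge_zero_mid (a x : V6) : wedge a 0 x = 0 := by
  simp [wedge, form]

/-- Mixed second partial: if `∂_u τ = 0` on an open set, then `∂_u (∂_v τ) = 0` there. -/
lemma mixed_zero (U : Set (ℝ × ℝ)) (hU : IsOpen U) (τ : ℝ × ℝ → V6)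
    (hτsmooth : ContDiffOn ℝ (⊤ : ℕ∞) τ U)
    (hcirc₂ : ∀ p ∈ U, pu τ p = 0) (p : ℝ × ℝ) (hp : p ∈ U) :
    fderiv ℝ (fun q => pv τ q) p (1,0) = 0 := by
  have hnhds : U ∈ nhds p := hU.mem_nhds hp
  have hτat : ContDiffAt ℝ (⊤ : ℕ∞) τ p := hτsmooth.contDiffAt hnhds
  have hd1 : ContDiffAt ℝ 1 (fderiv ℝ τ) p := hτat.fderiv_right (WithTop.coe_le_coe.mpr le_top)
  have hdd : DifferentiableAt ℝ (fderiv ℝ τ) p := hd1.differentiableAt (by simp)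
  have hsymm : IsSymmSndFDerivAt ℝ τ p := hτat.isSymmSndFDerivAt (by rw [minSmoothness_of_isRCLikeNormedField]; exact WithTop.coe_le_coe.mpr le_top)
  have h1 : HasFDerivAt (fun q => pv τ q)
      ((ContinuousLinearMap.apply ℝ V6 ((0:ℝ),(1:ℝ))).comp (fderiv ℝ (fderiv ℝ τ) p)) p :=
    ((ContinuousLinearMap.apply ℝ V6 ((0:ℝ),(1:ℝ))).hasFDerivAt).comp p hdd.hasFDerivAt
  have h2 : HasFDerivAt (fun q => pu τ q)
      ((ContinuousLinearMap.apply ℝ V6 ((1:ℝ),(0:ℝ))).comp (fderiv ℝ (fderiv ℝ τ) p)) p :=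
    ((ContinuousLinearMap.apply ℝ V6 ((1:ℝ),(0:ℝ))).hasFDerivAt).comp p hdd.hasFDerivAt
  have hzero : fderiv ℝ (fun q => pu τ q) p = 0 := by
    have heq : (fun q => pu τ q) =ᶠ[nhds p] (fun _ => (0:V6)) :=
      Filter.eventuallyEq_of_mem hnhds hcirc₂
    rw [heq.fderiv_eq, fderiv_fun_const]; rfl
  rw [h1.fderiv]
  have e2 := h2.fderiv
  rw [hzero] at e2
  have hs : fderiv ℝ (fderiv ℝ τ) p (1,0) (0,1) = fderiv ℝ (fderiv ℝ τ) p (0,1) (1,0) :=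
    hsymm _ _
  simp only [ContinuousLinearMap.comp_apply, ContinuousLinearMap.apply_apply]
  rw [hs]
  have := congrArg (fun (L : (ℝ×ℝ) →L[ℝ] V6) => L (0,1)) e2
  simpa using this.symm

/-- Differentiability of `pv τ` with an explicit derivative. -/
lemma hasFDerivAt_pv (U : Set (ℝ × ℝ)) (hU : IsOpen U) (τ : ℝ × ℝ → V6)
    (hτsmooth : ContDiffOn ℝ (⊤ : ℕ∞) τ U) (p : ℝ × ℝ) (hp : p ∈ U) :
    HasFDerivAt (fun q => pv τ q)
      ((ContinuousLinearMap.apply ℝ V6 ((0:ℝ),(1:ℝ))).comp (fderiv ℝ (fderiv ℝ τ) p)) p := by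
  have hτat : ContDiffAt ℝ (⊤ : ℕ∞) τ p := hτsmooth.contDiffAt (hU.mem_nhds hp)
  have hd1 : ContDiffAt ℝ 1 (fderiv ℝ τ) p := hτat.fderiv_right (WithTop.coe_le_coe.mpr le_top)
  exact ((ContinuousLinearMap.apply ℝ V6 ((0:ℝ),(1:ℝ))).hasFDerivAt).comp p
    (hd1.differentiableAt (by simp)).hasFDerivAt

/-- For a Ribaucour pair of channel surfaces with corresponding circular curvature
direction `∂_u` and normalised lifts `σ₁, τ` (`τ = σ̂₁`) of the circular curvature
spheres, `η := σ₁ ∧ dτ` is a closed 1-form with `η_u = 0` defining an `Ω₀`-structure,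
and `τ` is a parallel section of `d + η`; hence the pair is a Lie–Darboux pair. -/
theorem ribaucour_pair_of_channel_surfaces_is_lie_darboux
    (U : Set (ℝ × ℝ)) (hU : IsOpen U)
    (σ₁ τ : ℝ × ℝ → V6)
    (hσsmooth : ContDiffOn ℝ (⊤ : ℕ∞) σ₁ U)
    (hτsmooth : ContDiffOn ℝ (⊤ : ℕ∞) τ U)
    (hiso₁ : ∀ p ∈ U, form (σ₁ p) (σ₁ p) = 0)
    (hiso₂ : ∀ p ∈ U, form (τ p) (τ p) = 0)
    (hpair : ∀ p ∈ U, form (σ₁ p) (τ p) = -1)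
    (hd₁ : ∀ p ∈ U, form (pu σ₁ p) (σ₁ p) = 0 ∧ form (pu σ₁ p) (τ p) = 0 ∧
      form (pv σ₁ p) (σ₁ p) = 0 ∧ form (pv σ₁ p) (τ p) = 0)
    (hd₂ : ∀ p ∈ U, form (pu τ p) (σ₁ p) = 0 ∧ form (pu τ p) (τ p) = 0 ∧
      form (pv τ p) (σ₁ p) = 0 ∧ form (pv τ p) (τ p) = 0)
    (hcirc₁ : ∀ p ∈ U, pu σ₁ p = 0)
    (hcirc₂ : ∀ p ∈ U, pu τ p = 0) :
    (∀ p ∈ U, ∀ x : V6, wedge (σ₁ p) (pu τ p) x = 0) ∧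
    (∀ x : V6, ∀ p ∈ U,
      pu (fun q => wedge (σ₁ q) (pv τ q) x) p
        - pv (fun q => wedge (σ₁ q) (pu τ q) x) p = 0) ∧
    (∀ p ∈ U,
      pu τ p + wedge (σ₁ p) (pu τ p) (τ p) = 0 ∧
      pv τ p + wedge (σ₁ p) (pv τ p) (τ p) = 0) := by
  refine ⟨?_, ?_, ?_⟩
  · intro p hp x
    rw [hcirc₂ p hp, wedge_zero_mid]
  · intro x p hp
    have hnhds : U ∈ nhds p := hU.mem_nhds hp
    -- second term: the function is eventually 0
    have h2 : pv (fun q => wedge (σ₁ q) (pu τ q) x) p = 0 := by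
      have heq : (fun q => wedge (σ₁ q) (pu τ q) x) =ᶠ[nhds p] (fun _ => (0:V6)) := by
        refine Filter.eventuallyEq_of_mem hnhds fun q hq => ?_
        rw [hcirc₂ q hq, wedge_zero_mid]
      unfold pv
      rw [heq.fderiv_eq, fderiv_fun_const]; rfl
    -- first term
    have h1 : pu (fun q => wedge (σ₁ q) (pv τ q) x) p = 0 := by
      have hσat : ContDiffAt ℝ (⊤ : ℕ∞) σ₁ p := hσsmooth.contDiffAt hnhds
      have hσd : DifferentiableAt ℝ σ₁ p := hσat.differentiableAt (by simp)
      have hσ : HasFDerivAt σ₁ (fderiv ℝ σ₁ p) p := hσd.hasFDerivAt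
      have hg := hasFDerivAt_pv U hU τ hτsmooth p hp
      set G := ((ContinuousLinearMap.apply ℝ V6 ((0:ℝ),(1:ℝ))).comp
        (fderiv ℝ (fderiv ℝ τ) p)) with hGdef
      have hGu : G (1,0) = 0 := by
        have := mixed_zero U hU τ hτsmooth hcirc₂ p hp
        rwa [hg.fderiv] at this
      have hσu : fderiv ℝ σ₁ p (1,0) = 0 := hcirc₁ p hp
      have hc₁ : HasFDerivAt (fun q => form (σ₁ q) x)
          ((formL x).comp (fderiv ℝ σ₁ p)) p := (formL x).hasFDerivAt.comp p hσ
      have hc₂ : HasFDerivAt (fun q => form (pv τ q) x)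
          ((formL x).comp G) p := (formL x).hasFDerivAt.comp p hg
      have hF : HasFDerivAt (fun q => wedge (σ₁ q) (pv τ q) x)
          ((form (σ₁ p) x • G + ((formL x).comp (fderiv ℝ σ₁ p)).smulRight (pv τ p))
           - (form (pv τ p) x • fderiv ℝ σ₁ p + ((formL x).comp G).smulRight (σ₁ p))) p := by
        exact (hc₁.smul hg).sub (hc₂.smul hσ)
      unfold pu
      rw [hF.fderiv]
      simp [hGu, hσu]
    rw [h1, h2, sub_zero]
  · intro p hp
    constructor
    · rw [hcirc₂ p hp, wedge_zero_mid]; simp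
    · have h1 : form (σ₁ p) (τ p) = -1 := hpair p hp
      have h2 : form (pv τ p) (τ p) = 0 := (hd₂ p hp).2.2.2
      -- form in wedge: wedge a b x = form a x • b - form b x • a
      show pv τ p + (form (σ₁ p) (τ p) • pv τ p - form (pv τ p) (τ p) • σ₁ p) = 0
      rw [h1, h2]
      simp
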